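/- Let A be the exterior algebra of a 2-dimensional vector space over a field of characteristic not 2, B = K·1 the unit subalgebra, and V the center of A. Then V = K·1 + K·(e₁∧e₂), and A is not a projective V-module; in particular the extension A over V is not depth two. -/

import Mathlib

open TensorProduct LinearMap

noncomputable section

variable {K : Type*} [CommRing K] {A B : Type*} [Ring A] [Ring B] [Algebra K A] [Algebra K B]

/-- Left multiplication by `a` on the first tensorand of `A ⊗[K] A`. -/
def lmulT (a : A) : A ⊗[K] A →ₗ[K] A ⊗[K] A := rTensor A (mulLeft K a)

/-- Right multiplication by `a` on the second tensorand of `A ⊗[K] A`. -/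
def rmulT (a : A) : A ⊗[K] A →ₗ[K] A ⊗[K] A := lTensor A (mulRight K a)

/-- The relations defining `A ⊗_B A` as a quotient of `A ⊗[K] A`; working modulo
`relJ f` amounts to working in the tensor square `A ⊗_B A` of the extension `f`. -/
def relJ (f : B →ₐ[K] A) : Submodule K (A ⊗[K] A) :=
  Submodule.span K {z | ∃ x b y, z = (x * f b) ⊗ₜ[K] y - x ⊗ₜ[K] (f b * y)}

/-- `α` is a `B`-`B`-bimodule endomorphism of `A`. -/
def IsBB (f : B →ₐ[K] A) (α : A →ₗ[K] A) : Prop :=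
  (∀ b x, α (f b * x) = f b * α x) ∧ (∀ b x, α (x * f b) = α x * f b)

/-- `t` represents a `B`-central element of `A ⊗_B A`. -/
def IsCent (f : B →ₐ[K] A) (t : A ⊗[K] A) : Prop :=
  ∀ b, lmulT (K := K) (f b) t - rmulT (f b) t ∈ relJ f

/-- `A ⊗_B A` is isomorphic, as a `B`-`A`-bimodule, to a direct summand of `A^N`
for some positive `N`: there is a split mono `ι` (with splitting `π`), both maps
being `B`-`A`-bimodule maps (everything taken modulo the relations `relJ f`). -/
def LeftD2 (f : B →ₐ[K] A) : Prop :=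
  ∃ N : ℕ, 0 < N ∧ ∃ (ι : A ⊗[K] A →ₗ[K] (Fin N → A)) (π : (Fin N → A) →ₗ[K] A ⊗[K] A),
    (∀ z ∈ relJ f, ι z = 0) ∧
    (∀ b z, ι (lmulT (f b) z) = fun i => f b * ι z i) ∧
    (∀ a z, ι (rmulT a z) = fun i => ι z i * a) ∧
    (∀ b (v : Fin N → A), π (fun i => f b * v i) - lmulT (f b) (π v) ∈ relJ f) ∧
    (∀ a (v : Fin N → A), π (fun i => v i * a) - rmulT a (π v) ∈ relJ f) ∧
    (∀ z, π (ι z) - z ∈ relJ f)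

/-- `A ⊗_B A` is isomorphic, as an `A`-`B`-bimodule, to a direct summand of `A^N`. -/
def RightD2 (f : B →ₐ[K] A) : Prop :=
  ∃ N : ℕ, 0 < N ∧ ∃ (ι : A ⊗[K] A →ₗ[K] (Fin N → A)) (π : (Fin N → A) →ₗ[K] A ⊗[K] A),
    (∀ z ∈ relJ f, ι z = 0) ∧
    (∀ a z, ι (lmulT a z) = fun i => a * ι z i) ∧
    (∀ b z, ι (rmulT (f b) z) = fun i => ι z i * f b) ∧
    (∀ a (v : Fin N → A), π (fun i => a * v i) - lmulT a (π v) ∈ relJ f) ∧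
    (∀ b (v : Fin N → A), π (fun i => v i * f b) - rmulT (f b) (π v) ∈ relJ f) ∧
    (∀ z, π (ι z) - z ∈ relJ f)

/-- `A ⊗_B A` is isomorphic, as an `A`-`A`-bimodule, to a direct summand of `A^N`:
H-separability of the extension `f`. -/
def HSep (f : B →ₐ[K] A) : Prop :=
  ∃ N : ℕ, 0 < N ∧ ∃ (ι : A ⊗[K] A →ₗ[K] (Fin N → A)) (π : (Fin N → A) →ₗ[K] A ⊗[K] A),
    (∀ z ∈ relJ f, ι z = 0) ∧
    (∀ a z, ι (lmulT a z) = fun i => a * ι z i) ∧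
    (∀ a z, ι (rmulT a z) = fun i => ι z i * a) ∧
    (∀ a (v : Fin N → A), π (fun i => a * v i) - lmulT a (π v) ∈ relJ f) ∧
    (∀ a (v : Fin N → A), π (fun i => v i * a) - rmulT a (π v) ∈ relJ f) ∧
    (∀ z, π (ι z) - z ∈ relJ f)

/-!
Write `e₀, e₁` for the generators, `ω = e₀ e₁`, and `x₀, x₁` for the coefficients of `e₀, e₁`
in the basis `1, e₀, e₁, ω`. Then `e₀ x - x e₀ = 2 x₁ ω` and `e₁ x - x e₁ = -2 x₀ ω`, so when `2`
is a non-zero-divisor the center `V` is `R + Rω`. Since `ω ∈ V` kills `e₀`, flatness of `A` over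
`V` would give, by the equational criterion, `e₀ = Σ aⱼ yⱼ` with `ω aⱼ = 0`, i.e. `aⱼ ∈ Rω`; but
`Rω · A = Rω` does not contain `e₀`. Likewise a `V`-`A`-split embedding of `A ⊗_V A` into `Aⁿ`
sends `u = e₀ ⊗ e₁ - e₁ ⊗ e₀`, which `e₀` and `e₁` kill on the right, into `ω Aⁿ`, forcing
`u ∈ ω (A ⊗_V A)`. This is impossible: the functional `x ⊗ y ↦ x₀ y₁` is well defined on
`A ⊗_V A`, vanishes on `ω (A ⊗_V A)` and takes the value `1` at `u`.
-/

theorem Module.Flat.exists_eq_sum_smul_of_smul_eq_zero {R M : Type*} [CommRing R]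
    [AddCommGroup M] [Module R M] [Module.Flat R M] {r : R} {m : M} (h : r • m = 0) :
    ∃ (n : ℕ) (a : Fin n → R) (y : Fin n → M), m = ∑ j, a j • y j ∧ ∀ j, r * a j = 0 := by
  obtain ⟨n, a, y, hm, ha⟩ := Module.Flat.isTrivialRelation_of_sum_smul_eq_zero
    (f := fun _ : Unit => r) (x := fun _ => m) (by simpa using h)
  exact ⟨n, a (), y, hm (), fun j => by simpa using ha j⟩

@[simp] lemma lmulT_tmul (a x y : A) : lmulT (K := K) a (x ⊗ₜ y) = (a * x) ⊗ₜ y := rfl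

@[simp] lemma rmulT_tmul (a x y : A) : rmulT (K := K) a (x ⊗ₜ y) = x ⊗ₜ (y * a) := rfl

lemma mul_tmul_sub_tmul_mul_mem_relJ (f : B →ₐ[K] A) (x y : A) (b : B) :
    (x * f b) ⊗ₜ[K] y - x ⊗ₜ[K] (f b * y) ∈ relJ f :=
  Submodule.subset_span ⟨x, b, y, rfl⟩

theorem LeftD2.exists_sub_lmulT_mem_relJ {f : B →ₐ[K] A} (hf : LeftD2 f) {S : Set A}
    {u : A ⊗[K] A} (hu : ∀ s ∈ S, rmulT s u ∈ relJ f) (b : B)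
    (hb : ∀ a : A, (∀ s ∈ S, a * s = 0) → ∃ c, a = f b * c) :
    ∃ z, u - lmulT (f b) z ∈ relJ f := by
  obtain ⟨N, -, ι, π, hι, -, hιr, hπl, -, hπι⟩ := hf
  choose c hc using fun i => hb (ι u i) fun s hs => by
    simpa [hι _ (hu s hs)] using (congrFun (hιr s u) i).symm
  refine ⟨π c, ?_⟩
  have hιu : ι u = fun i => f b * c i := funext hc
  simpa [hιu] using Submodule.sub_mem _ (hπl b c) (hπι u)

theorem Finset.orderEmbOfFin_univ_fin {n : ℕ} (h : (univ : Finset (Fin n)).card = n)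
    (j : Fin n) : univ.orderEmbOfFin h j = j :=
  (congrFun (orderEmbOfFin_unique h (f := fun j => j) (fun _ => mem_univ _) strictMono_id) j).symm

namespace ExteriorAlgebra.Plane

open Module

variable (R : Type*) [CommRing R]

local notation "Λ" => ExteriorAlgebra R (Fin 2 → R)

def e (i : Fin 2) : Λ := ι R (Pi.single i 1)

def vol : Λ := e R 0 * e R 1

def basis : Basis (Finset (Fin 2)) R Λ := (Pi.basisFun R (Fin 2)).ExteriorAlgebra

variable {R}

@[simp] lemma e_mul_self (i : Fin 2) : e R i * e R i = 0 := ι_sq_zero _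

lemma e_zero_mul_e_one : e R 0 * e R 1 = vol R := rfl

@[simp] lemma e_one_mul_e_zero : e R 1 * e R 0 = -vol R :=
  eq_neg_of_add_eq_zero_left (ι_add_mul_swap _ _)

@[simp] lemma e_mul_vol (i : Fin 2) : e R i * vol R = 0 := by
  rw [vol, ← mul_assoc]
  fin_cases i
  · rw [Fin.zero_eta, e_mul_self, zero_mul]
  · rw [Fin.mk_one, e_one_mul_e_zero, neg_mul, vol, mul_assoc, e_mul_self, mul_zero, neg_zero]

@[simp] lemma vol_mul_e (i : Fin 2) : vol R * e R i = 0 := by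
  rw [vol, mul_assoc]
  fin_cases i
  · rw [Fin.zero_eta, e_one_mul_e_zero, mul_neg, vol, ← mul_assoc, e_mul_self, zero_mul, neg_zero]
  · rw [Fin.mk_one, e_mul_self, mul_zero]

@[simp] lemma vol_mul_vol : vol R * vol R = 0 :=
  (mul_assoc (e R 0) (e R 1) (vol R)).trans (by rw [e_mul_vol, mul_zero])

@[simp] lemma basis_empty : basis R ∅ = 1 := by
  simp [basis, ExteriorAlgebra.basis_apply]

@[simp] lemma basis_singleton (i : Fin 2) : basis R {i} = e R i := by
  simp [basis, e, ExteriorAlgebra.basis_apply_ofCard (n := 1) _ (Finset.card_singleton i),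
    ιMulti_apply, Set.powersetCard.ofFinEmbEquiv_symm_apply]

@[simp] lemma basis_univ : basis R Finset.univ = vol R := by
  rw [basis, ExteriorAlgebra.basis_apply_ofCard (n := 2) _ (Finset.card_fin 2), ιMulti_family,
    ιMulti_apply]
  simp [Set.powersetCard.ofFinEmbEquiv_symm_apply, Set.powersetCard.val_ofCard,
    Finset.orderEmbOfFin_univ_fin, List.ofFn_succ, vol, e]

@[simp] lemma repr_one : (basis R).repr 1 = Finsupp.single ∅ 1 := by
  rw [← basis_empty, Basis.repr_self]

@[simp] lemma repr_e (i : Fin 2) : (basis R).repr (e R i) = Finsupp.single {i} 1 := by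
  rw [← basis_singleton, Basis.repr_self]

@[simp] lemma repr_vol : (basis R).repr (vol R) = Finsupp.single Finset.univ 1 := by
  rw [← basis_univ, Basis.repr_self]

lemma eq_sum_repr (x : Λ) :
    x = (basis R).repr x ∅ • 1 + (basis R).repr x {0} • e R 0 + (basis R).repr x {1} • e R 1 +
      (basis R).repr x Finset.univ • vol R := by
  conv_lhs => rw [← (basis R).sum_repr x]
  rw [show (Finset.univ : Finset (Finset (Fin 2))) = {∅, {0}, {1}, Finset.univ} by decide,
    Finset.sum_insert (by decide), Finset.sum_insert (by decide), Finset.sum_insert (by decide),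
    Finset.sum_singleton]
  simp [add_assoc]

lemma vol_mul (x : Λ) : vol R * x = (basis R).repr x ∅ • vol R := by
  conv_lhs => rw [eq_sum_repr x]
  simp [mul_add]

lemma mul_vol (x : Λ) : x * vol R = (basis R).repr x ∅ • vol R := by
  conv_lhs => rw [eq_sum_repr x]
  simp [add_mul]

lemma e_zero_mul (x : Λ) :
    e R 0 * x = (basis R).repr x ∅ • e R 0 + (basis R).repr x {1} • vol R := by
  conv_lhs => rw [eq_sum_repr x]
  simp [mul_add, e_zero_mul_e_one]

lemma mul_e_zero (x : Λ) :
    x * e R 0 = (basis R).repr x ∅ • e R 0 - (basis R).repr x {1} • vol R := by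
  conv_lhs => rw [eq_sum_repr x]
  simp [add_mul, sub_eq_add_neg]

lemma e_one_mul (x : Λ) :
    e R 1 * x = (basis R).repr x ∅ • e R 1 - (basis R).repr x {0} • vol R := by
  conv_lhs => rw [eq_sum_repr x]
  simp [mul_add, sub_eq_add_neg]

lemma mul_e_one (x : Λ) :
    x * e R 1 = (basis R).repr x ∅ • e R 1 + (basis R).repr x {0} • vol R := by
  conv_lhs => rw [eq_sum_repr x]
  simp [add_mul, e_zero_mul_e_one]

lemma vol_mem_center : vol R ∈ Subalgebra.center R Λ :=
  Subalgebra.mem_center_iff.2 fun x => by rw [mul_vol, vol_mul]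

lemma e_zero_notMem_span_vol [Nontrivial R] : e R 0 ∉ R ∙ vol R := by
  intro hmem
  obtain ⟨c, hc⟩ := Submodule.mem_span_singleton.1 hmem
  simpa using congrArg (fun y => (basis R).repr y {0}) hc

lemma eq_smul_vol_of_mul_e_eq_zero {x : Λ} (h0 : x * e R 0 = 0) (h1 : x * e R 1 = 0) :
    x = (basis R).repr x Finset.univ • vol R := by
  rw [mul_e_zero] at h0
  rw [mul_e_one] at h1
  have hempty : (basis R).repr x ∅ = 0 := by
    simpa using congrArg (fun y => (basis R).repr y {0}) h0
  have hzero : (basis R).repr x {0} = 0 := by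
    simpa using congrArg (fun y => (basis R).repr y Finset.univ) h1
  have hone : (basis R).repr x {1} = 0 := by
    simpa using congrArg (fun y => (basis R).repr y Finset.univ) h0
  conv_lhs => rw [eq_sum_repr x]
  simp [hempty, hzero, hone]

lemma e_tmul_vol_mem_relJ (i : Fin 2) :
    e R i ⊗ₜ[R] vol R ∈ relJ (Subalgebra.center R Λ).val := by
  simpa using mul_tmul_sub_tmul_mul_mem_relJ (Subalgebra.center R Λ).val (e R i) 1
    ⟨vol R, vol_mem_center⟩

variable (R) in
def coordPairing : Λ ⊗[R] Λ →ₗ[R] R :=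
  TensorProduct.lift (((basis R).coord {0}).smulRight ((basis R).coord {1}))

@[simp] lemma coordPairing_tmul (x y : Λ) :
    coordPairing R (x ⊗ₜ y) = (basis R).repr x {0} * (basis R).repr y {1} := by
  simp [coordPairing]

lemma coordPairing_lmulT_vol (z : Λ ⊗[R] Λ) : coordPairing R (lmulT (K := R) (vol R) z) = 0 := by
  induction z using TensorProduct.induction_on with
  | zero => simp
  | tmul x y => simp [vol_mul]
  | add x y hx hy => simp [hx, hy]

section NoZeroDivisors

variable [NoZeroDivisors R] (h2 : (2 : R) ≠ 0)
include h2

lemma repr_singleton_eq_zero_of_mem_center {x : Λ} (hx : x ∈ Subalgebra.center R Λ)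
    (i : Fin 2) : (basis R).repr x {i} = 0 := by
  have hcomm (j : Fin 2) := congrArg (fun y => (basis R).repr y Finset.univ)
    (Subalgebra.mem_center_iff.1 hx (e R j))
  have htwo : ∀ i : Fin 2, 2 * (basis R).repr x {i} = 0 := by
    refine Fin.forall_fin_two.2 ⟨?_, ?_⟩
    · have := hcomm 1
      simp [e_one_mul, mul_e_one] at this
      linear_combination -this
    · have := hcomm 0
      simp [e_zero_mul, mul_e_zero] at this
      linear_combination this
  exact (mul_eq_zero.1 (htwo i)).resolve_left h2

lemma eq_smul_one_add_smul_vol_of_mem_center {x : Λ} (hx : x ∈ Subalgebra.center R Λ) :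
    x = (basis R).repr x ∅ • 1 + (basis R).repr x Finset.univ • vol R := by
  conv_lhs => rw [eq_sum_repr x]
  simp [repr_singleton_eq_zero_of_mem_center h2 hx]

theorem center_eq_span :
    Subalgebra.toSubmodule (Subalgebra.center R Λ) = Submodule.span R {1, vol R} := by
  apply le_antisymm
  · intro x hx
    rw [eq_smul_one_add_smul_vol_of_mem_center h2 hx]
    exact Submodule.mem_span_pair.2 ⟨_, _, rfl⟩
  · rw [Submodule.span_le, Set.insert_subset_iff, Set.singleton_subset_iff]
    exact ⟨Subalgebra.one_mem _, vol_mem_center⟩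

lemma mul_mem_span_vol_of_mem_center {c : Λ} (hc : c ∈ Subalgebra.center R Λ)
    (hvc : vol R * c = 0) (y : Λ) : c * y ∈ R ∙ vol R := by
  have hempty : (basis R).repr c ∅ = 0 := by
    simpa using congrArg (fun z => (basis R).repr z Finset.univ) ((vol_mul c).symm.trans hvc)
  rw [eq_smul_one_add_smul_vol_of_mem_center h2 hc, hempty, zero_smul, zero_add, smul_mul_assoc, vol_mul]
  exact Submodule.smul_mem _ _ (Submodule.smul_mem _ _ (Submodule.mem_span_singleton_self _))

theorem not_flat_center : ¬ Module.Flat (Subalgebra.center R Λ) Λ := by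
  intro _
  have : Nontrivial R := nontrivial_of_ne 2 0 h2
  have hvol : (⟨vol R, vol_mem_center⟩ : Subalgebra.center R Λ) • e R 0 = 0 := vol_mul_e 0
  obtain ⟨n, a, y, he, ha⟩ := Module.Flat.exists_eq_sum_smul_of_smul_eq_zero hvol
  refine e_zero_notMem_span_vol (he ▸ Submodule.sum_mem _ fun j _ => ?_)
  exact mul_mem_span_vol_of_mem_center h2 (a j).2 (congrArg Subtype.val (ha j)) _

lemma relJ_center_le_ker_coordPairing :
    relJ (Subalgebra.center R Λ).val ≤ LinearMap.ker (coordPairing R) := by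
  rw [relJ, Submodule.span_le]
  rintro _ ⟨x, c, y, rfl⟩
  rw [SetLike.mem_coe, LinearMap.mem_ker, map_sub, coordPairing_tmul, coordPairing_tmul, Subalgebra.coe_val,
    eq_smul_one_add_smul_vol_of_mem_center h2 c.2]
  simp [mul_add, add_mul, mul_vol, vol_mul]
  ring

theorem not_leftD2_center : ¬ LeftD2 (Subalgebra.center R Λ).val := by
  intro hD
  have : Nontrivial R := nontrivial_of_ne 2 0 h2
  have hu : ∀ s ∈ ({e R 0, e R 1} : Set Λ),
      rmulT s (e R 0 ⊗ₜ[R] e R 1 - e R 1 ⊗ₜ[R] e R 0) ∈ relJ (Subalgebra.center R Λ).val := by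
    rintro s (rfl | rfl)
    · simpa [tmul_neg] using e_tmul_vol_mem_relJ (R := R) 0
    · simpa [e_zero_mul_e_one] using e_tmul_vol_mem_relJ (R := R) 1
  obtain ⟨z, hz⟩ := hD.exists_sub_lmulT_mem_relJ hu ⟨vol R, vol_mem_center⟩ fun x hx =>
    ⟨(basis R).repr x Finset.univ • 1, by
      rw [mul_smul_comm, mul_one]
      exact eq_smul_vol_of_mul_e_eq_zero (hx _ (by simp)) (hx _ (by simp))⟩
  simpa [coordPairing_lmulT_vol] using relJ_center_le_ker_coordPairing h2 hz

end NoZeroDivisors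

end ExteriorAlgebra.Plane

/-- for the exterior algebra `A = Λ(W₂)` of a 2-dimensional vector space
over a field of characteristic ≠ 2, the center `V` (which is the double centralizer of
the unit subalgebra `B = K·1`) equals `K·1 + K·(e₁ ∧ e₂)`, `A` is not a projective
`V`-module, and in particular the extension `A | V` is not depth two. -/
theorem exterior_center_not_projective (k : Type*) [Field k] (hchar : (2 : k) ≠ 0) :
    (Subalgebra.toSubmodule (Subalgebra.center k (ExteriorAlgebra k (Fin 2 → k))) =
        Submodule.span k {1, ExteriorAlgebra.ι k (Pi.single 0 1) *
          ExteriorAlgebra.ι k (Pi.single 1 1)}) ∧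
    (letI : Module (ExteriorAlgebra k (Fin 2 → k)) (ExteriorAlgebra k (Fin 2 → k)) :=
        Semiring.toModule
     letI : Module ↥(Subalgebra.center k (ExteriorAlgebra k (Fin 2 → k)))
        (ExteriorAlgebra k (Fin 2 → k)) :=
      Module.compHom _ (Subalgebra.center k (ExteriorAlgebra k (Fin 2 → k))).val.toRingHom
     ¬ Module.Projective ↥(Subalgebra.center k (ExteriorAlgebra k (Fin 2 → k)))
        (ExteriorAlgebra k (Fin 2 → k))) ∧
    ¬ (LeftD2 (Subalgebra.center k (ExteriorAlgebra k (Fin 2 → k))).val ∧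
        RightD2 (Subalgebra.center k (ExteriorAlgebra k (Fin 2 → k))).val) := by
  refine ⟨ExteriorAlgebra.Plane.center_eq_span hchar, ?_,
    fun hD2 => ExteriorAlgebra.Plane.not_leftD2_center hchar hD2.1⟩
  intro hP
  exact ExteriorAlgebra.Plane.not_flat_center hchar (@Module.Flat.of_projective _ _ _ _ _ hP)

end
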